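/- (Lemma 3: the modal context tree determines satisfaction.) Let M be the model of an interpreted system with regular labelling and φ an EHS⁺_{AB̄N} formula (an EHS⁺ formula whose modalities are all among K_i, C_Γ, ⟨A⟩, ⟨B̄⟩, ⟨N⟩). If I and I' are intervals of M with MCT_I^φ = MCT_{I'}^φ, then M,I ⊨ φ if and only if M,I' ⊨ φ. -/

import Mathlib

/-- The Halpern-Shoham interval modalities. -/
inductive HSMod : Type where
  | A | Abar | B | Bbar | D | Dbar | E | Ebar | L | Lbar | N | Nbar | O | Obar
  deriving DecidableEq

/-- Formulas of the logic EHS⁺ over agents `0,…,m` and propositional variables `V`. -/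
inductive EHSFormula (m : ℕ) (V : Type) : Type where
  | pt : EHSFormula m V
  | prop : V → EHSFormula m V
  | neg : EHSFormula m V → EHSFormula m V
  | conj : EHSFormula m V → EHSFormula m V → EHSFormula m V
  | know : Fin (m + 1) → EHSFormula m V → EHSFormula m V
  | common : Finset (Fin (m + 1)) → EHSFormula m V → EHSFormula m V
  | dia : HSMod → EHSFormula m V → EHSFormula m V
  deriving DecidableEq

/-- An interpreted system with regular labelling over agents `0,…,m` (agent `0` is the
environment) and variables `Var`. -/
structure ISRL (m : ℕ) (Var : Type) where
  L : Fin (m + 1) → Type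
  finL : ∀ i, Fintype (L i)
  l0 : ∀ i, L i
  ACT : Fin (m + 1) → Type
  finACT : ∀ i, Fintype (ACT i)
  P : ∀ i, L i → Set (ACT i)
  T : ∀ i, L i → (∀ j, ACT j) → L i → Prop
  lab : Var → RegularExpression (∀ i, L i)

attribute [instance] ISRL.finL ISRL.finACT

namespace ISRL

variable {m : ℕ} {Var : Type}

/-- Global configurations. -/
abbrev G (IS : ISRL m Var) : Type := ∀ i, IS.L i

instance (IS : ISRL m Var) : Fintype IS.G := Pi.instFintype

/-- The initial global configuration. -/
def g0 (IS : ISRL m Var) : IS.G := IS.l0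

/-- The global transition relation `t^G`. -/
def tG (IS : ISRL m Var) (g g' : IS.G) : Prop :=
  ∃ a : ∀ j, IS.ACT j, ∀ i, a i ∈ IS.P i (g i) ∧ IS.T i (g i) a (g' i)

/-- A partial state: a nonempty `t^G`-chain of configurations. -/
def IsPState (IS : ISRL m Var) (w : List IS.G) : Prop :=
  w ≠ [] ∧ w.Chain' IS.tG

/-- A global state of the model: a partial state starting at the initial configuration. -/
def IsState (IS : ISRL m Var) (w : List IS.G) : Prop :=
  IS.IsPState w ∧ w.head? = some IS.g0

/-- `g(s)`: the actual configuration of a (partial) state, i.e. its last configuration. -/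
def gOf (IS : ISRL m Var) (w : List IS.G) : IS.G := w.getLastD IS.g0

/-- The global transition relation `t` of the model: extension by exactly one configuration. -/
def step (IS : ISRL m Var) (w w' : List IS.G) : Prop := ∃ g : IS.G, w' = w ++ [g]

/-- Epistemic indistinguishability of states for agent `i`. -/
def simS (IS : ISRL m Var) (i : Fin (m + 1)) (w w' : List IS.G) : Prop :=
  IS.gOf w i = IS.gOf w' i

/-- An interval of the model: a nonempty `t`-path of global states. -/
def IsInterval (IS : ISRL m Var) (l : List (List IS.G)) : Prop :=
  l ≠ [] ∧ (∀ w ∈ l, IS.IsState w) ∧ l.Chain' IS.step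

/-- Intervals of the model of `IS`. -/
structure Interval (IS : ISRL m Var) : Type where
  seq : List (List IS.G)
  isInterval : IS.IsInterval seq

namespace Interval

variable {IS : ISRL m Var}

/-- `first(I)`. -/
def first (I : Interval IS) : List IS.G := I.seq.headD []

/-- `last(I)`. -/
def last (I : Interval IS) : List IS.G := I.seq.getLastD []

/-- `I` is a point interval. -/
def isPt (I : Interval IS) : Prop := I.seq.length = 1

/-- `g(I)`, the word of configurations read along `I`. -/
def gword (I : Interval IS) : List IS.G := I.seq.map IS.gOf

end Interval

section rels

variable {IS : ISRL m Var}

def relA (I I' : Interval IS) : Prop := I'.first = I.last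
def relB (I I' : Interval IS) : Prop :=
  ∃ J : List (List IS.G), J ≠ [] ∧ I.seq = I'.seq ++ J
def relD (I I' : Interval IS) : Prop :=
  ∃ J K : List (List IS.G), J ≠ [] ∧ K ≠ [] ∧ I.seq = J ++ I'.seq ++ K
def relE (I I' : Interval IS) : Prop :=
  ∃ J : List (List IS.G), J ≠ [] ∧ I.seq = J ++ I'.seq
def relL (I I' : Interval IS) : Prop := Relation.TransGen IS.step I.last I'.first
def relN (I I' : Interval IS) : Prop := IS.step I.last I'.first
def relO (I I' : Interval IS) : Prop :=
  ∃ J K : List (List IS.G), J ≠ [] ∧ K ≠ [] ∧ I.seq ++ J = K ++ I'.seq ∧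
    IS.IsInterval (I.seq ++ J)

end rels

/-- The Allen relations on intervals of the model of `IS`. -/
def hsRel (IS : ISRL m Var) : HSMod → Interval IS → Interval IS → Prop
  | .A => fun I I' => relA I I'
  | .Abar => fun I I' => relA I' I
  | .B => fun I I' => relB I I'
  | .Bbar => fun I I' => relB I' I
  | .D => fun I I' => relD I I'
  | .Dbar => fun I I' => relD I' I
  | .E => fun I I' => relE I I'
  | .Ebar => fun I I' => relE I' I
  | .L => fun I I' => relL I I'
  | .Lbar => fun I I' => relL I' I
  | .N => fun I I' => relN I I'
  | .Nbar => fun I I' => relN I' I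
  | .O => fun I I' => relO I I'
  | .Obar => fun I I' => relO I' I

/-- Epistemic indistinguishability of intervals for agent `i`. -/
def simI (IS : ISRL m Var) (i : Fin (m + 1)) (I I' : Interval IS) : Prop :=
  List.Forall₂ (IS.simS i) I.seq I'.seq

/-- `∼_Γ`: the transitive closure of the union of the `∼_i`, `i ∈ Γ`. -/
def simC (IS : ISRL m Var) (Γ : Finset (Fin (m + 1))) : Interval IS → Interval IS → Prop :=
  Relation.TransGen (fun I I' => ∃ i ∈ Γ, IS.simI i I I')

/-- Satisfaction of EHS⁺ formulas at an interval, with respect to a labelling `lab`. -/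
def Sat (IS : ISRL m Var) {W : Type} (lab : W → RegularExpression IS.G) :
    EHSFormula m W → Interval IS → Prop
  | .pt, I => I.isPt
  | .prop p, I => I.gword ∈ (lab p).matches'
  | .neg φ, I => ¬ Sat IS lab φ I
  | .conj φ ψ, I => Sat IS lab φ I ∧ Sat IS lab ψ I
  | .know i φ, I => ∀ I', IS.simI i I' I → Sat IS lab φ I'
  | .common Γ φ, I => ∀ I', IS.simC Γ I' I → Sat IS lab φ I'
  | .dia X φ, I => ∃ I', IS.hsRel X I I' ∧ Sat IS lab φ I'

end ISRL

/-- The `AB̄N` fragment of EHS⁺: all modalities are among `K_i`, `C_Γ`, `⟨A⟩`, `⟨B̄⟩`, `⟨N⟩`. -/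
def IsABN {m : ℕ} {V : Type} : EHSFormula m V → Prop
  | .pt => True
  | .prop _ => True
  | .neg φ => IsABN φ
  | .conj φ ψ => IsABN φ ∧ IsABN ψ
  | .know _ φ => IsABN φ
  | .common _ φ => IsABN φ
  | .dia X φ => (X = HSMod.A ∨ X = HSMod.Bbar ∨ X = HSMod.N) ∧ IsABN φ

/-- A size function on formulas (used as a termination measure). -/
def fsize {m : ℕ} {V : Type} : EHSFormula m V → ℕ
  | .pt => 1
  | .prop _ => 1
  | .neg φ => fsize φ + 1
  | .conj φ ψ => fsize φ + fsize ψ + 1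
  | .know _ φ => fsize φ + 1
  | .common _ φ => fsize φ + 1
  | .dia _ φ => fsize φ + 1

/-- The set of top-level subformulas of a formula: modal subformulas not in the scope of
any modality. -/
def TL {m : ℕ} {V : Type} [DecidableEq V] : EHSFormula m V → Finset (EHSFormula m V)
  | .pt => ∅
  | .prop _ => ∅
  | .neg φ => TL φ
  | .conj φ ψ => TL φ ∪ TL ψ
  | .know i φ => {EHSFormula.know i φ}
  | .common Γ φ => {EHSFormula.common Γ φ}
  | .dia X φ => {EHSFormula.dia X φ}

/-- The body of a (modal) formula. -/
def body {m : ℕ} {V : Type} : EHSFormula m V → EHSFormula m V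
  | .pt => .pt
  | .prop p => .prop p
  | .neg φ => .neg φ
  | .conj φ ψ => .conj φ ψ
  | .know _ φ => φ
  | .common _ φ => φ
  | .dia _ φ => φ

theorem fsize_body_lt {m : ℕ} {V : Type} [DecidableEq V] (φ : EHSFormula m V) :
    ∀ χ ∈ TL φ, fsize (body χ) < fsize φ := by
  induction φ with
  | pt => simp [TL]
  | prop p => simp [TL]
  | neg φ ih =>
      intro χ hχ
      have := ih χ hχ
      simp only [fsize]
      omega
  | conj φ ψ ih1 ih2 =>
      intro χ hχ
      simp only [TL, Finset.mem_union] at hχ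
      rcases hχ with h | h
      · have := ih1 χ h; simp only [fsize]; omega
      · have := ih2 χ h; simp only [fsize]; omega
  | know i φ ih =>
      intro χ hχ
      simp only [TL, Finset.mem_singleton] at hχ
      subst hχ
      simp only [body, fsize]
      omega
  | common Γ φ ih =>
      intro χ hχ
      simp only [TL, Finset.mem_singleton] at hχ
      subst hχ
      simp only [body, fsize]
      omega
  | dia X φ ih =>
      intro χ hχ
      simp only [TL, Finset.mem_singleton] at hχ
      subst hχ
      simp only [body, fsize]
      omega

/-- The function `f(φ) = base · ∏_{Xψ top-level subformula of φ} 2^{f(ψ)}`, where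
`base = 2·|G|²·∏_{p ∈ Var} |Q_p|` is supplied as a parameter. -/
def fval {m : ℕ} {V : Type} [DecidableEq V] (base : ℕ) (φ : EHSFormula m V) : ℕ :=
  base * ∏ χ ∈ (TL φ).attach, 2 ^ fval base (body χ.1)
termination_by fsize φ
decreasing_by exact fsize_body_lt φ χ.1 χ.2

namespace ISRL

variable {m : ℕ} {Var : Type}

/-- The relation on intervals associated with a top-level (modal) subformula:
`R_{K_i} = ∼_i`, `R_{C_Γ} = ∼_Γ`, and `R_{⟨X⟩} = R_X`. -/
def modRel (IS : ISRL m Var) {W : Type} : EHSFormula m W → Interval IS → Interval IS → Prop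
  | .know i _ => IS.simI i
  | .common Γ _ => IS.simC Γ
  | .dia X _ => IS.hsRel X
  | _ => fun _ _ => False

/-- Equality of the modal context trees `MCT_I^φ = MCT_{I'}^φ`, expressed recursively:
the root labels `(g(first(I)), g(last(I)), pi(I), 𝒜_{g(I)})` coincide, and for every
top-level subformula `Xψ` of `φ` the sets of subtrees `{MCT_J^ψ : I R_X J}` and
`{MCT_{J'}^ψ : I' R_X J'}` coincide. -/
def MCTEq (IS : ISRL m Var) [DecidableEq Var] (Q : Var → Type) (dfa : ∀ p, DFA IS.G (Q p))
    (φ : EHSFormula m Var) (I I' : Interval IS) : Prop :=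
  IS.gOf I.first = IS.gOf I'.first ∧
  IS.gOf I.last = IS.gOf I'.last ∧
  (I.isPt ↔ I'.isPt) ∧
  (∀ p, (dfa p).eval I.gword = (dfa p).eval I'.gword) ∧
  (∀ χ ∈ TL φ,
    (∀ J, IS.modRel χ I J → ∃ J', IS.modRel χ I' J' ∧ MCTEq IS Q dfa (body χ) J J') ∧
    (∀ J', IS.modRel χ I' J' → ∃ J, IS.modRel χ I J ∧ MCTEq IS Q dfa (body χ) J J'))
termination_by fsize φ
decreasing_by all_goals exact fsize_body_lt φ _ (by assumption)

end ISRL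

/-! Equality of modal context trees is a back-and-forth condition between the subtrees reached
along each top-level modality, so satisfaction transfers by induction on `φ`. The operators `K_i`
and `C_Γ` quantify along the converse of their relation, which is harmless because `∼_i` and
`∼_Γ` are symmetric. -/

section BackAndForth

variable {α β : Type*} {R : α → β → Prop} {E : β → β → Prop} {P : β → Prop} {a a' : α}

theorem exists_rel_iff_of_forth_back (forth : ∀ b, R a b → ∃ b', R a' b' ∧ E b b')
    (back : ∀ b', R a' b' → ∃ b, R a b ∧ E b b') (hP : ∀ b b', E b b' → (P b ↔ P b')) :
    (∃ b, R a b ∧ P b) ↔ ∃ b', R a' b' ∧ P b' := by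
  constructor
  · rintro ⟨b, hab, hb⟩
    obtain ⟨b', ha'b', hE⟩ := forth b hab
    exact ⟨b', ha'b', (hP b b' hE).mp hb⟩
  · rintro ⟨b', ha'b', hb'⟩
    obtain ⟨b, hab, hE⟩ := back b' ha'b'
    exact ⟨b, hab, (hP b b' hE).mpr hb'⟩

theorem forall_rel_iff_of_forth_back {R : α → α → Prop} [Std.Symm R] {E : α → α → Prop}
    {P : α → Prop} {a a' : α} (forth : ∀ b, R a b → ∃ b', R a' b' ∧ E b b')
    (back : ∀ b', R a' b' → ∃ b, R a b ∧ E b b') (hP : ∀ b b', E b b' → (P b ↔ P b')) :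
    (∀ b, R b a → P b) ↔ ∀ b', R b' a' → P b' := by
  constructor
  · intro hP_a b' hb'
    obtain ⟨b, hab, hE⟩ := back b' (symm hb')
    exact (hP b b' hE).mp (hP_a b (symm hab))
  · intro hP_a' b hb
    obtain ⟨b', ha'b', hE⟩ := forth b (symm hb)
    exact (hP b b' hE).mpr (hP_a' b' (symm ha'b'))

end BackAndForth

namespace ISRL

variable {m : ℕ} {Var : Type} {IS : ISRL m Var}

instance (i : Fin (m + 1)) : Std.Symm (IS.simI i) where
  symm _ _ h := (h.imp fun _ _ => Eq.symm).flip

instance (Γ : Finset (Fin (m + 1))) : Std.Symm (IS.simC Γ) :=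
  have : Std.Symm fun I I' : Interval IS => ∃ i ∈ Γ, IS.simI i I I' :=
    ⟨fun _ _ ⟨i, hi, h⟩ => ⟨i, hi, symm h⟩⟩
  Relation.TransGen.stdSymm

namespace MCTEq

variable [DecidableEq Var] {Q : Var → Type} {dfa : ∀ p, DFA IS.G (Q p)} {φ : EHSFormula m Var}
  {I I' : Interval IS}

theorem isPt_iff (h : MCTEq IS Q dfa φ I I') : I.isPt ↔ I'.isPt := by
  rw [MCTEq] at h
  exact h.2.2.1

theorem eval_eq (h : MCTEq IS Q dfa φ I I') (p : Var) :
    (dfa p).eval I.gword = (dfa p).eval I'.gword := by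
  rw [MCTEq] at h
  exact h.2.2.2.1 p

theorem mono {ψ : EHSFormula m Var} (h : MCTEq IS Q dfa φ I I') (hsub : TL ψ ⊆ TL φ) :
    MCTEq IS Q dfa ψ I I' := by
  rw [MCTEq] at h ⊢
  exact ⟨h.1, h.2.1, h.2.2.1, h.2.2.2.1, fun χ hχ => h.2.2.2.2 χ (hsub hχ)⟩

theorem forth {χ : EHSFormula m Var} (h : MCTEq IS Q dfa φ I I') (hχ : χ ∈ TL φ) :
    ∀ J, IS.modRel χ I J → ∃ J', IS.modRel χ I' J' ∧ MCTEq IS Q dfa (body χ) J J' := by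
  rw [MCTEq] at h
  exact (h.2.2.2.2 χ hχ).1

theorem back {χ : EHSFormula m Var} (h : MCTEq IS Q dfa φ I I') (hχ : χ ∈ TL φ) :
    ∀ J', IS.modRel χ I' J' → ∃ J, IS.modRel χ I J ∧ MCTEq IS Q dfa (body χ) J J' := by
  rw [MCTEq] at h
  exact (h.2.2.2.2 χ hχ).2

end MCTEq

theorem sat_iff_of_MCTEq [DecidableEq Var] {Q : Var → Type} {dfa : ∀ p, DFA IS.G (Q p)}
    (hdfa : ∀ p, (dfa p).accepts = (IS.lab p).matches') (φ : EHSFormula m Var)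
    {I I' : Interval IS} (h : MCTEq IS Q dfa φ I I') :
    Sat IS IS.lab φ I ↔ Sat IS IS.lab φ I' := by
  induction φ generalizing I I' with
  | pt => exact h.isPt_iff
  | prop p => simp only [Sat, ← hdfa p, DFA.mem_accepts, h.eval_eq p]
  | neg ψ ih => exact not_congr (ih (h.mono subset_rfl))
  | conj ψ₁ ψ₂ ih₁ ih₂ =>
      exact and_congr (ih₁ (h.mono Finset.subset_union_left))
        (ih₂ (h.mono Finset.subset_union_right))
  | know i ψ ih =>
      have hχ := Finset.mem_singleton_self (EHSFormula.know i ψ)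
      exact forall_rel_iff_of_forth_back (h.forth hχ) (h.back hχ) fun _ _ => ih
  | common Γ ψ ih =>
      have hχ := Finset.mem_singleton_self (EHSFormula.common Γ ψ)
      exact forall_rel_iff_of_forth_back (h.forth hχ) (h.back hχ) fun _ _ => ih
  | dia X ψ ih =>
      have hχ := Finset.mem_singleton_self (EHSFormula.dia X ψ)
      exact exists_rel_iff_of_forth_back (h.forth hχ) (h.back hχ) fun _ _ => ih

end ISRL

open ISRL in
theorem stmt8_general {m : ℕ} {Var : Type} [DecidableEq Var] (IS : ISRL m Var)
    (Q : Var → Type) (dfa : ∀ p, DFA IS.G (Q p))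
    (hdfa : ∀ p, (dfa p).accepts = (IS.lab p).matches')
    (φ : EHSFormula m Var)
    (I I' : ISRL.Interval IS) (h : MCTEq IS Q dfa φ I I') :
    Sat IS IS.lab φ I ↔ Sat IS IS.lab φ I' :=
  sat_iff_of_MCTEq hdfa φ h

open ISRL in
/-- Lemma 3: the modal context tree determines satisfaction.  If `I` and `I'`
are intervals of the model `M` with `MCT_I^φ = MCT_{I'}^φ`, then `M,I ⊨ φ` iff `M,I' ⊨ φ`. -/
theorem stmt8 {m : ℕ} {Var : Type} [Fintype Var] [DecidableEq Var] (IS : ISRL m Var)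
    (Q : Var → Type) [∀ p, Fintype (Q p)] (dfa : ∀ p, DFA IS.G (Q p))
    (hdfa : ∀ p, (dfa p).accepts = (IS.lab p).matches')
    (φ : EHSFormula m Var) (hφ : IsABN φ)
    (I I' : ISRL.Interval IS) (h : MCTEq IS Q dfa φ I I') :
    Sat IS IS.lab φ I ↔ Sat IS IS.lab φ I' :=
  stmt8_general IS Q dfa hdfa φ I I' h
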